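/- arXiv:1604.02227 — 2 statements merged into one kernel-verified Lean document; each statement's English description precedes it below -/
import Mathlib

section
/- For the half-line quantum walk at even times, the return probabilities in the two coin states coincide: P(X_{2t}^{HL} = 0; 0) = P(X_{2t}^{HL} = 0; 1) for all t ≥ 1, i.e. |α_{2t}(0)|² = |β_{2t}(0)|². -/
noncomputable def halfWalk (θ : ℝ) : ℕ → (ℕ → ℂ) × (ℕ → ℂ)
  | 0 =>
      (fun x => if x = 0 then Complex.exp (-(θ : ℂ) * Complex.I) / (Real.sqrt 2 : ℂ) else 0,
       fun x => if x = 0 then Complex.I * Complex.exp (-(θ : ℂ) * Complex.I) / (Real.sqrt 2 : ℂ) else 0)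
  | t + 1 =>
      (fun x => (Real.cos θ : ℂ) * (halfWalk θ t).1 (x + 1) + (Real.sin θ : ℂ) * (halfWalk θ t).2 (x + 1),
       fun x =>
         if x = 0 then (Real.cos θ : ℂ) * (halfWalk θ t).1 0 + (Real.sin θ : ℂ) * (halfWalk θ t).2 0
         else (Real.sin θ : ℂ) * (halfWalk θ t).1 (x - 1) - (Real.cos θ : ℂ) * (halfWalk θ t).2 (x - 1))

/-!
Both amplitudes satisfy the phase relation `ψ_t(x) = i ψ_t(x + 1)` whenever `x + t` is odd, and
`β_t(0) = i α_t(0)` at even times. The bulk relation is transported by the walk since every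
amplitude at time `t + 1` is the same linear combination of amplitudes at neighbouring sites of
time `t`. At the wall, `β_{t+1}(0) = (c + i s) α_t(0)` and `β_{t+1}(1) = (s - i c) α_t(0)` differ by
the factor `i`, and the boundary relation at time `t + 2` comes from the bulk relation at `x = 0`.
Since `|i| = 1`, the two return probabilities agree at every even time.
-/

namespace halfWalk

open Complex

variable (θ : ℝ) (t x : ℕ)

theorem succ_fst : (halfWalk θ (t + 1)).1 x
    = Real.cos θ * (halfWalk θ t).1 (x + 1) + Real.sin θ * (halfWalk θ t).2 (x + 1) := rfl

theorem succ_snd_zero : (halfWalk θ (t + 1)).2 0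
    = Real.cos θ * (halfWalk θ t).1 0 + Real.sin θ * (halfWalk θ t).2 0 := rfl

theorem succ_snd_succ : (halfWalk θ (t + 1)).2 (x + 1)
    = Real.sin θ * (halfWalk θ t).1 x - Real.cos θ * (halfWalk θ t).2 x := rfl

def PhaseRelated (t : ℕ) : Prop :=
  (∀ x : ℕ, Odd (x + t) →
    (halfWalk θ t).1 x = I * (halfWalk θ t).1 (x + 1) ∧
    (halfWalk θ t).2 x = I * (halfWalk θ t).2 (x + 1)) ∧
  (Even t → (halfWalk θ t).2 0 = I * (halfWalk θ t).1 0)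

theorem phaseRelated_zero : PhaseRelated θ 0 := by
  refine ⟨fun x hx => ?_, fun _ => ?_⟩
  · have hx0 : x ≠ 0 := by rintro rfl; exact Nat.not_odd_zero hx
    simp [halfWalk, hx0]
  · simp only [halfWalk, if_true, mul_div_assoc]

variable {θ t} in
theorem PhaseRelated.succ (h : PhaseRelated θ t) : PhaseRelated θ (t + 1) := by
  obtain ⟨bulk, wall⟩ := h
  refine ⟨fun x hx => ⟨?_, ?_⟩, fun ht => ?_⟩
  · obtain ⟨hα, hβ⟩ := bulk (x + 1) (by rwa [add_right_comm])
    rw [succ_fst, succ_fst, hα, hβ]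
    ring
  · cases x with
    | zero =>
      have ht : Even t := by simpa [Nat.odd_add_one] using hx
      rw [succ_snd_zero, succ_snd_succ, wall ht]
      linear_combination (Real.cos θ * (halfWalk θ t).1 0 : ℂ) * I_sq
    | succ y =>
      obtain ⟨hα, hβ⟩ := bulk y (by rw [Nat.odd_iff] at hx ⊢; omega)
      rw [succ_snd_succ, succ_snd_succ, hα, hβ]
      ring
  · obtain ⟨hα, hβ⟩ := bulk 0 (by simpa [Nat.even_add_one] using ht)
    rw [succ_snd_zero, succ_fst, hα, hβ]
    ring

theorem phaseRelated : PhaseRelated θ t := by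
  induction t with
  | zero => exact phaseRelated_zero θ
  | succ t ih => exact ih.succ

theorem snd_zero_of_even {t : ℕ} (ht : Even t) : (halfWalk θ t).2 0 = I * (halfWalk θ t).1 0 :=
  (phaseRelated θ t).2 ht

end halfWalk

theorem half_line_return_probabilities_equal_general (θ : ℝ) :
    ∀ t : ℕ, 1 ≤ t →
      ‖(halfWalk θ (2 * t)).1 0‖ ^ 2
        = ‖(halfWalk θ (2 * t)).2 0‖ ^ 2 := by
  intro t _
  rw [halfWalk.snd_zero_of_even θ (even_two_mul t), norm_mul, Complex.norm_I, one_mul]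

theorem half_line_return_probabilities_equal (θ : ℝ) (hθ : θ ∈ Set.Ico 0 (2 * Real.pi))
    (h0 : θ ≠ 0) (hπ : θ ≠ Real.pi) :
    ∀ t : ℕ, 1 ≤ t →
      ‖(halfWalk θ (2 * t)).1 0‖ ^ 2
        = ‖(halfWalk θ (2 * t)).2 0‖ ^ 2 :=
  half_line_return_probabilities_equal_general θ
end

section
/- For θ = π/4 the limit density of the half-line quantum walk takes the explicit form: ∫_0^{1/√2} 2/(π(1-y²)√(1-2y²)) dy = 1, i.e. the function y ↦ 2/(π(1-y²)√(1-2y²)) is a probability density on [0, 1/√2). -/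
/-!
For `0 < c < 1`, the substitution `sin φ = √(1 - c²) y / (c √(1 - y²))` gives
`∫₀^c dy / ((1 - y²) √(c² - y²)) = π / (2 √(1 - c²))`. With `c = 1/√2` one has
`√(1 - 2y²) = √2 √(c² - y²)` and `√(1 - c²) = 1/√2`, so the density integrates to
`2 / (π √2) · π √2 / 2 = 1`.
-/

open MeasureTheory Real Set

lemma hasDerivAt_div_sqrt_one_sub_sq {y : ℝ} (hy : y ^ 2 < 1) :
    HasDerivAt (fun y => y / √(1 - y ^ 2)) (1 / ((1 - y ^ 2) * √(1 - y ^ 2))) y := by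
  have hpos : 0 < 1 - y ^ 2 := by linarith
  have hsqrt : HasDerivAt (fun y => √(1 - y ^ 2)) (-(2 * y) / (2 * √(1 - y ^ 2))) y :=
    (((hasDerivAt_pow 2 y).const_sub 1).sqrt hpos.ne').congr_deriv (by ring)
  refine ((hasDerivAt_id' y).div hsqrt (sqrt_pos.2 hpos).ne').congr_deriv ?_
  have hs : √(1 - y ^ 2) ^ 2 = 1 - y ^ 2 := sq_sqrt hpos.le
  field_simp
  linear_combination (-y ^ 2) * hs

/-- The `arcsin` argument reaches `1` exactly at `y = c`, so this primitive stays continuous there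
and the improper integral over `[0, c)` is a plain fundamental theorem of calculus. -/
noncomputable def halfLinePrimitive (c y : ℝ) : ℝ :=
  arcsin (√(1 - c ^ 2) / c * (y / √(1 - y ^ 2))) / √(1 - c ^ 2)

section
variable {c y : ℝ}

lemma one_sub_sq_halfLinePrimitive_arg (hc : c ≠ 0) (hc1 : c ^ 2 ≤ 1) (hy : y ^ 2 < 1) :
    1 - (√(1 - c ^ 2) / c * (y / √(1 - y ^ 2))) ^ 2 = (c ^ 2 - y ^ 2) / (c ^ 2 * (1 - y ^ 2)) := by
  rw [mul_pow, div_pow, div_pow, sq_sqrt (by linarith), sq_sqrt (by linarith)]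
  have : 1 - y ^ 2 ≠ 0 := by linarith
  field_simp
  ring

lemma hasDerivAt_halfLinePrimitive (hc : 0 < c) (hc1 : c < 1) (hy : y ^ 2 < c ^ 2) :
    HasDerivAt (halfLinePrimitive c) (1 / ((1 - y ^ 2) * √(c ^ 2 - y ^ 2))) y := by
  have hy1 : y ^ 2 < 1 := by nlinarith
  set k := √(1 - c ^ 2)
  have hk : 0 < k := sqrt_pos.2 (by nlinarith)
  set u := k / c * (y / √(1 - y ^ 2))
  have hu : 1 - u ^ 2 = (c ^ 2 - y ^ 2) / (c ^ 2 * (1 - y ^ 2)) :=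
    one_sub_sq_halfLinePrimitive_arg hc.ne' (by nlinarith) hy1
  have hu_pos : 0 < 1 - u ^ 2 := by
    rw [hu]; apply div_pos <;> nlinarith
  have hu1 : u ≠ 1 := by rintro h; simp [h] at hu_pos
  have hum1 : u ≠ -1 := by rintro h; simp [h] at hu_pos
  have hsqrt_u : √(1 - u ^ 2) = √(c ^ 2 - y ^ 2) / (c * √(1 - y ^ 2)) := by
    rw [hu, sqrt_div' _ (by nlinarith), sqrt_mul (by positivity), sqrt_sq hc.le]
  refine ((((hasDerivAt_arcsin hum1 hu1).comp y
    ((hasDerivAt_div_sqrt_one_sub_sq hy1).const_mul (k / c))).div_const k)).congr_deriv ?_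
  rw [hsqrt_u]
  have h1 : 0 < √(1 - y ^ 2) := sqrt_pos.2 (by linarith)
  have h2 : 0 < √(c ^ 2 - y ^ 2) := sqrt_pos.2 (by linarith)
  have h3 : 1 - y ^ 2 ≠ 0 := by linarith
  field_simp

lemma continuousOn_halfLinePrimitive (hc1 : c < 1) :
    ContinuousOn (halfLinePrimitive c) (Icc 0 c) := by
  unfold halfLinePrimitive
  refine Continuous.comp_continuousOn (g := fun t => arcsin t / √(1 - c ^ 2)) (by fun_prop) ?_
  refine continuousOn_const.mul (continuousOn_id.div (by fun_prop) fun y hy => ?_)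
  exact (sqrt_pos.2 (by nlinarith [hy.1, hy.2])).ne'

lemma halfLinePrimitive_zero : halfLinePrimitive c 0 = 0 := by
  simp [halfLinePrimitive]

lemma halfLinePrimitive_self (hc : 0 < c) (hc1 : c < 1) :
    halfLinePrimitive c c = π / (2 * √(1 - c ^ 2)) := by
  have hk : 0 < √(1 - c ^ 2) := sqrt_pos.2 (by nlinarith)
  rw [halfLinePrimitive, div_mul_div_comm, mul_comm c, div_self (by positivity), arcsin_one,
    div_div]

theorem integral_Ico_one_div_one_sub_sq_mul_sqrt_sq_sub_sq (hc : 0 < c) (hc1 : c < 1) :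
    ∫ y in Ico 0 c, 1 / ((1 - y ^ 2) * √(c ^ 2 - y ^ 2)) = π / (2 * √(1 - c ^ 2)) := by
  have hderiv : ∀ y ∈ Ioo 0 c, HasDerivAt (halfLinePrimitive c)
      (1 / ((1 - y ^ 2) * √(c ^ 2 - y ^ 2))) y := fun y hy =>
    hasDerivAt_halfLinePrimitive hc hc1 (by nlinarith [hy.1, hy.2])
  have hnonneg : ∀ y ∈ Ioo 0 c, 0 ≤ 1 / ((1 - y ^ 2) * √(c ^ 2 - y ^ 2)) := fun y hy => by
    have : 0 < 1 - y ^ 2 := by nlinarith [hy.1, hy.2]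
    positivity
  have hint : IntervalIntegrable (fun y => 1 / ((1 - y ^ 2) * √(c ^ 2 - y ^ 2))) volume 0 c := by
    refine intervalIntegral.intervalIntegrable_deriv_of_nonneg (g := halfLinePrimitive c)
      ?_ ?_ ?_ <;> simp only [uIcc_of_le hc.le, min_eq_left hc.le, max_eq_right hc.le]
    exacts [continuousOn_halfLinePrimitive hc1, hderiv, hnonneg]
  rw [integral_Ico_eq_integral_Ioc, ← intervalIntegral.integral_of_le hc.le,
    intervalIntegral.integral_eq_sub_of_hasDerivAt_of_le hc.le
      (continuousOn_halfLinePrimitive hc1) hderiv hint,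
    halfLinePrimitive_self hc hc1, halfLinePrimitive_zero, sub_zero]

end

theorem hadamard_half_line_density_integral :
    ∫ y in Set.Ico 0 (1 / Real.sqrt 2),
      2 / (Real.pi * (1 - y ^ 2) * Real.sqrt (1 - 2 * y ^ 2)) = 1 := by
  have hc_sq : (1 / √2) ^ 2 = (1 / 2 : ℝ) := by rw [div_pow, one_pow, sq_sqrt zero_le_two]
  have hintegrand : ∀ y : ℝ, 2 / (π * (1 - y ^ 2) * √(1 - 2 * y ^ 2)) =
      2 / (π * √2) * (1 / ((1 - y ^ 2) * √((1 / √2) ^ 2 - y ^ 2))) := fun y => by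
    rw [hc_sq, show 1 - 2 * y ^ 2 = 2 * (1 / 2 - y ^ 2) by ring, sqrt_mul zero_le_two]
    field_simp
  simp_rw [hintegrand]
  rw [integral_const_mul, integral_Ico_one_div_one_sub_sq_mul_sqrt_sq_sub_sq (by positivity)
    (by rw [div_lt_one (by positivity), lt_sqrt zero_le_one]; norm_num), hc_sq,
    show (1 : ℝ) - 1 / 2 = (√2)⁻¹ ^ 2 by rw [inv_pow, sq_sqrt zero_le_two]; norm_num,
    sqrt_sq (by positivity)]
  field_simp
end
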